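/- Let (G=(V,E),R) be a graph with roots and M a matroid on R of rank k with rank function r_M, satisfying (C1): R_v is independent in M for each v∈V. Let N(f_{M,k}) be the matroid on E induced by f_{M,k}. Then for every F⊆E, the rank of F in N(f_{M,k}) equals the minimum, over all partitions P of V into nonempty subsets, of |δ_F(P)| + k(|V|−|P|) − |R| + Σ_{X∈P} r_M(R_X). -/

import Mathlib

open Finset
open scoped Classical

/-- Vertex set `V(F)` of an edge subset `F`: vertices incident to an edge of `F`. -/
noncomputable def incVerts {V E : Type*} [Fintype V] (ends : E → Sym2 V) (F : Finset E) :
    Finset V :=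
  Finset.univ.filter (fun v => ∃ e ∈ F, v ∈ ends e)

/-- The multiset `R_v` of roots located at a vertex `v` (as a set of root indices). -/
noncomputable def rootsAt {V ι : Type*} [Fintype ι] (root : ι → V) (v : V) : Finset ι :=
  Finset.univ.filter (fun i => root i = v)

/-- The multiset `R_F` of roots located at vertices of `V(F)`. -/
noncomputable def rootsOf {V E ι : Type*} [Fintype V] [Fintype ι] (ends : E → Sym2 V)
    (root : ι → V) (F : Finset E) : Finset ι :=
  Finset.univ.filter (fun i => root i ∈ incVerts ends F)

/-- The multiset `R_X` of roots located at vertices of `X ⊆ V`. -/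
noncomputable def rootsIn {V ι : Type*} [Fintype ι] (root : ι → V) (X : Finset V) : Finset ι :=
  Finset.univ.filter (fun i => root i ∈ X)

/-- A matroid on a finite ground type `ι`, given by its rank function. -/
structure FinMatroid (ι : Type*) [Fintype ι] where
  rk : Finset ι → ℕ
  rk_le_card : ∀ X : Finset ι, rk X ≤ X.card
  rk_mono : ∀ ⦃X Y : Finset ι⦄, X ⊆ Y → rk X ≤ rk Y
  rk_submodular : ∀ X Y : Finset ι, rk (X ∪ Y) + rk (X ∩ Y) ≤ rk X + rk Y

/-- Independence in a matroid given by a rank function. -/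
def FinMatroid.Indep {ι : Type*} [Fintype ι] (M : FinMatroid ι) (X : Finset ι) : Prop :=
  M.rk X = X.card

/-- `X` is a base of the matroid with rank function `ρ`: independent and spanning. -/
def IsBaseOf {ι : Type*} [Fintype ι] (ρ : Finset ι → ℕ) (X : Finset ι) : Prop :=
  ρ X = X.card ∧ ρ X = ρ Finset.univ

/-- The closure (span) `sp(X)` of `X` in the matroid with rank function `ρ`. -/
noncomputable def spOf {ι : Type*} [Fintype ι] (ρ : Finset ι → ℕ) (X : Finset ι) : Finset ι :=
  Finset.univ.filter (fun y => ρ (insert y X) = ρ X)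

/-- Two vertices are adjacent via an edge of `F`. -/
def adjIn {V E : Type*} (ends : E → Sym2 V) (F : Finset E) (u v : V) : Prop :=
  ∃ e ∈ F, ends e = s(u, v)

/-- The edge set `F` is connected: all its incident vertices are mutually reachable in `F`. -/
def connIn {V E : Type*} [Fintype V] (ends : E → Sym2 V) (F : Finset E) : Prop :=
  ∀ u ∈ incVerts ends F, ∀ v ∈ incVerts ends F, Relation.ReflTransGen (adjIn ends F) u v

/-- `(T, r)` is a rooted tree: `T` is empty, or `T` is connected and acyclic with `r ∈ V(T)`.
(A connected edge set `T` is acyclic iff `|T| + 1 = |V(T)|`.) -/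
def IsRootedTree {V E : Type*} [Fintype V] (ends : E → Sym2 V) (T : Finset E) (r : V) : Prop :=
  T = ∅ ∨ (connIn ends T ∧ T.card + 1 = (incVerts ends T).card ∧ r ∈ incVerts ends T)

/-- The vertex set `V(T, r) = V(T) ∪ {r}` spanned by the rooted tree `(T, r)`. -/
noncomputable def treeVerts {V E : Type*} [Fintype V] (ends : E → Sym2 V) (T : Finset E)
    (r : V) : Finset V :=
  insert r (incVerts ends T)

/-- `T` is a spanning tree on the vertex set `X`. -/
def IsSpanningTreeOn {V E : Type*} [Fintype V] (ends : E → Sym2 V) (X : Finset V)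
    (T : Finset E) : Prop :=
  incVerts ends T ⊆ X ∧ (∀ u ∈ X, ∀ v ∈ X, Relation.ReflTransGen (adjIn ends T) u v) ∧
    T.card + 1 = X.card

/-- The family `T` is a basic rooted-tree decomposition of the subgraph with vertex set `Vs`,
edge set `Es` and roots indexed by `Rs`, with respect to the matroid (on `Rs`) whose rank
function is `ρ`: the `T i` are edge-disjoint rooted trees partitioning `Es`, and every vertex
of `Vs` is spanned by a family of rooted trees whose root multiset is a base. -/
def IsBasicDecompFam {V E ι : Type*} [Fintype V] [Fintype ι] (ends : E → Sym2 V) (root : ι → V)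
    (ρ : Finset ι → ℕ) (Vs : Finset V) (Rs : Finset ι) (Es : Finset E)
    (T : ι → Finset E) : Prop :=
  (∀ i ∈ Rs, T i ⊆ Es ∧ IsRootedTree ends (T i) (root i)) ∧
  (∀ i ∉ Rs, T i = ∅) ∧
  (∀ i j, i ≠ j → Disjoint (T i) (T j)) ∧
  (∀ e ∈ Es, ∃ i ∈ Rs, e ∈ T i) ∧
  (∀ v ∈ Vs, IsBaseOf ρ (Rs.filter (fun i => v ∈ treeVerts ends (T i) (root i))))

/-- `(G, R)` admits a basic rooted-tree decomposition. -/
def HasBasicDecomp {V E ι : Type*} [Fintype V] [Fintype ι] (ends : E → Sym2 V) (root : ι → V)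
    (ρ : Finset ι → ℕ) (Vs : Finset V) (Rs : Finset ι) (Es : Finset E) : Prop :=
  ∃ T : ι → Finset E, IsBasicDecompFam ends root ρ Vs Rs Es T

/-- Condition (C1): the root multiset at each vertex is independent. -/
def CondC1 {V ι : Type*} [Fintype ι] (root : ι → V) (ρ : Finset ι → ℕ) : Prop :=
  ∀ v : V, ρ (rootsAt root v) = (rootsAt root v).card

/-- Condition (C2): `|F| + |R_F| ≤ k|V(F)| - k + ρ(R_F)` for every nonempty `F ⊆ E`. -/
def CondC2 {V E ι : Type*} [Fintype V] [Fintype E] [Fintype ι] (ends : E → Sym2 V)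
    (root : ι → V) (ρ : Finset ι → ℕ) (k : ℕ) : Prop :=
  ∀ F : Finset E, F.Nonempty →
    F.card + (rootsOf ends root F).card + k ≤
      k * (incVerts ends F).card + ρ (rootsOf ends root F)

/-- Condition (C3): `|E| + |R| = k|V|`. -/
def CondC3 (V E ι : Type*) [Fintype V] [Fintype E] [Fintype ι] (k : ℕ) : Prop :=
  Fintype.card E + Fintype.card ι = k * Fintype.card V

/-- The function `f_{M,c}(F) = c(|V(F)| - 1) - (|R_F| - r_M(R_F))`, as an integer. -/
noncomputable def fcount {V E ι : Type*} [Fintype V] [Fintype E] [Fintype ι] (ends : E → Sym2 V)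
    (root : ι → V) (ρ : Finset ι → ℕ) (c : ℤ) (F : Finset E) : ℤ :=
  c * ((incVerts ends F).card - 1) -
    (((rootsOf ends root F).card : ℤ) - (ρ (rootsOf ends root F) : ℤ))

/-- The edges of `F` whose endpoints lie in two distinct classes of the partition
with classes `P`. -/
noncomputable def crossingEdges {V E : Type*} (ends : E → Sym2 V) (P : Finset (Finset V))
    (F : Finset E) : Finset E :=
  F.filter (fun e => ¬ ∃ X ∈ P, ∀ v ∈ ends e, v ∈ X)

/-- The rank of `F` in the matroid `N(f)` induced by the (integer-valued monotone
submodular) function `f` on `E`: the maximum cardinality of a subset `I ⊆ F` with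
`|I'| ≤ f(I')` for all nonempty `I' ⊆ I`. -/
noncomputable def inducedRank {E : Type*} (f : Finset E → ℤ) (F : Finset E) : ℕ :=
  (F.powerset.filter
    (fun I => ∀ I' ⊆ I, I'.Nonempty → (I'.card : ℤ) ≤ f I')).sup Finset.card


/-!
For a monotone submodular `g` on vertex sets with `g {v} = 0`, the rank of `F` in the matroid
induced by `J ↦ g (V(J))` is `min_P |δ_F(P)| + Σ_{X ∈ P} g X`, and `f_{M,k}` is of this form with
`g X = k(|X| - 1) - |R_X| + r_M(R_X)` ((C1) gives `g {v} = 0`). The bound `≤` holds because an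
independent `I ⊆ F` has at most `g X` edges inside each class `X`. For equality take a maximal
independent `I ⊆ F`. Vertex sets with exactly `g X` edges of `I` inside them ("tight" sets) are
closed under unions of intersecting pairs by submodularity, so the maximal tight sets partition
`V`. Every edge of `F \ I` lies in a tight set, hence crosses no class, and the count is exact.
-/

section InducedRank

variable {E : Type*}

abbrev InducedIndep (f : Finset E → ℤ) (I : Finset E) : Prop :=
  ∀ I' ⊆ I, I'.Nonempty → (#I' : ℤ) ≤ f I'

lemma exists_maximal_inducedIndep (f : Finset E → ℤ) (F : Finset E) :
    ∃ I ⊆ F, InducedIndep f I ∧ inducedRank f F = #I ∧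
      ∀ e ∈ F, e ∉ I → ¬ InducedIndep f (insert e I) := by
  have hempty : ∅ ∈ F.powerset.filter (InducedIndep f) :=
    mem_filter.2 ⟨empty_mem_powerset F, fun _ hI' hne => absurd (subset_empty.1 hI') hne.ne_empty⟩
  obtain ⟨I, hI, hsup⟩ := exists_mem_eq_sup _ ⟨∅, hempty⟩ card
  rw [mem_filter, mem_powerset] at hI
  refine ⟨I, hI.1, hI.2, hsup, fun e heF heI hindep => ?_⟩
  have hle : #(insert e I) ≤ #I := hsup ▸
    le_sup (f := card) (mem_filter.2 ⟨mem_powerset.2 (insert_subset heF hI.1), hindep⟩)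
  rw [card_insert_of_notMem heI] at hle
  omega

end InducedRank

section TightSets

variable {V E : Type*} [Fintype V] [DecidableEq V] (ends : E → Sym2 V)

omit [DecidableEq V] in
lemma mem_incVerts {F : Finset E} {v : V} : v ∈ incVerts ends F ↔ ∃ e ∈ F, v ∈ ends e := by
  simp [incVerts]

lemma mem_crossingEdges {P : Finset (Finset V)} {F : Finset E} {e : E} :
    e ∈ crossingEdges ends P F ↔ e ∈ F ∧ ¬ ∃ X ∈ P, ∀ v ∈ ends e, v ∈ X := by
  simp [crossingEdges]

lemma crossingEdges_mono (P : Finset (Finset V)) {F F' : Finset E} (h : F ⊆ F') :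
    crossingEdges ends P F ⊆ crossingEdges ends P F' := by
  intro e
  simp only [mem_crossingEdges]
  exact And.imp_left (@h e)

def insideEdges (S : Finset E) (X : Finset V) : Finset E :=
  S.filter fun e => ∀ v ∈ ends e, v ∈ X

lemma incVerts_insideEdges_subset (S : Finset E) (X : Finset V) :
    incVerts ends (insideEdges ends S X) ⊆ X := by
  intro v hv
  obtain ⟨e, he, hve⟩ := (mem_incVerts ends).1 hv
  exact (mem_filter.1 he).2 v hve

lemma card_insideEdges_add_card_insideEdges_le (S : Finset E) (X Y : Finset V) :
    #(insideEdges ends S X) + #(insideEdges ends S Y) ≤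
      #(insideEdges ends S (X ∪ Y)) + #(insideEdges ends S (X ∩ Y)) := by
  have hinter : insideEdges ends S X ∩ insideEdges ends S Y = insideEdges ends S (X ∩ Y) := by
    ext e
    simp only [insideEdges, mem_inter, mem_filter]
    grind
  have hunion : insideEdges ends S X ∪ insideEdges ends S Y ⊆ insideEdges ends S (X ∪ Y) := by
    intro e
    simp only [insideEdges, mem_union, mem_filter]
    grind
  rw [← card_union_add_card_inter, hinter]
  exact Nat.add_le_add_right (card_le_card hunion) _

lemma card_eq_card_crossingEdges_add_sum_card_insideEdges
    (P : Finpartition (univ : Finset V)) (S : Finset E) :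
    #S = #(crossingEdges ends P.parts S) + ∑ X ∈ P.parts, #(insideEdges ends S X) := by
  have hdisj : (P.parts : Set (Finset V)).PairwiseDisjoint (insideEdges ends S) := by
    intro X hX Y hY hXY
    refine disjoint_left.2 fun e heX heY => hXY ?_
    have hv := Sym2.out_fst_mem (ends e)
    exact P.eq_of_mem_parts hX hY ((mem_filter.1 heX).2 _ hv) ((mem_filter.1 heY).2 _ hv)
  have hinside : P.parts.biUnion (insideEdges ends S) =
      S.filter fun e => ∃ X ∈ P.parts, ∀ v ∈ ends e, v ∈ X := by
    ext e
    simp only [insideEdges, mem_biUnion, mem_filter]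
    grind
  have hcross : crossingEdges ends P.parts S =
      S.filter fun e => ¬ ∃ X ∈ P.parts, ∀ v ∈ ends e, v ∈ X := by
    ext e
    simp only [mem_crossingEdges, mem_filter]
  rw [← card_biUnion hdisj, hinside, hcross, add_comm, card_filter_add_card_filter_not]

def IsTight (g : Finset V → ℤ) (I : Finset E) (X : Finset V) : Prop :=
  X.Nonempty ∧ (#(insideEdges ends I X) : ℤ) = g X

variable {g : Finset V → ℤ}

section Independent

variable (hmono : Monotone g) (hsingle : ∀ v, g {v} = 0) {I : Finset E}
  (hI : InducedIndep (fun J => g (incVerts ends J)) I)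
include hmono hsingle hI

lemma card_insideEdges_le {X : Finset V} (hX : X.Nonempty) :
    (#(insideEdges ends I X) : ℤ) ≤ g X := by
  rcases (insideEdges ends I X).eq_empty_or_nonempty with hempty | hne
  · obtain ⟨v, hv⟩ := hX
    simpa [hempty, hsingle] using hmono (singleton_subset_iff.2 hv)
  · exact (hI _ (filter_subset _ _) hne).trans (hmono (incVerts_insideEdges_subset ends I X))

lemma card_le_card_crossingEdges_add_sum {F : Finset E} (hIF : I ⊆ F)
    (P : Finpartition (univ : Finset V)) :
    (#I : ℤ) ≤ #(crossingEdges ends P.parts F) + ∑ X ∈ P.parts, g X := by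
  have hcross : #(crossingEdges ends P.parts I) ≤ #(crossingEdges ends P.parts F) :=
    card_le_card (crossingEdges_mono ends P.parts hIF)
  have hinside : ∑ X ∈ P.parts, (#(insideEdges ends I X) : ℤ) ≤ ∑ X ∈ P.parts, g X :=
    sum_le_sum fun X hX => card_insideEdges_le ends hmono hsingle hI (P.nonempty_of_mem_parts hX)
  rw [card_eq_card_crossingEdges_add_sum_card_insideEdges ends P I]
  push_cast
  omega

lemma isTight_singleton (v : V) : IsTight ends g I {v} := by
  refine ⟨singleton_nonempty v, le_antisymm ?_ ?_⟩
  · exact card_insideEdges_le ends hmono hsingle hI (singleton_nonempty v)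
  · rw [hsingle]; positivity

lemma exists_isTight_of_not_inducedIndep_insert {e : E}
    (hdep : ¬ InducedIndep (fun J => g (incVerts ends J)) (insert e I)) :
    ∃ X, IsTight ends g I X ∧ ∀ v ∈ ends e, v ∈ X := by
  simp only [InducedIndep, not_forall, not_le, exists_prop] at hdep
  obtain ⟨J, hJ, hJne, hJlt⟩ := hdep
  have heJ : e ∈ J := by
    by_contra heJ
    exact hJlt.not_ge (hI J ((subset_insert_iff_of_notMem heJ).1 hJ) hJne)
  have hends : ∀ v ∈ ends e, v ∈ incVerts ends J := fun v hv => (mem_incVerts ends).2 ⟨e, heJ, hv⟩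
  have hXne : (incVerts ends J).Nonempty := ⟨_, hends _ (Sym2.out_fst_mem _)⟩
  have herase : J.erase e ⊆ insideEdges ends I (incVerts ends J) := by
    intro e' he'
    obtain ⟨hne, he'J⟩ := mem_erase.1 he'
    exact mem_filter.2 ⟨(mem_insert.1 (hJ he'J)).resolve_left hne,
      fun v hv => (mem_incVerts ends).2 ⟨e', he'J, hv⟩⟩
  refine ⟨incVerts ends J, ⟨hXne, le_antisymm (card_insideEdges_le ends hmono hsingle hI hXne) ?_⟩,
    hends⟩
  have hcard := card_le_card herase
  rw [card_erase_of_mem heJ] at hcard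
  omega

lemma isTight_union (hsub : ∀ X Y, g (X ∪ Y) + g (X ∩ Y) ≤ g X + g Y) ⦃X Y : Finset V⦄
    (hX : IsTight ends g I X) (hY : IsTight ends g I Y) (hXY : (X ∩ Y).Nonempty) :
    IsTight ends g I (X ∪ Y) := by
  have hXYne : (X ∪ Y).Nonempty := hX.1.mono subset_union_left
  have hunion := card_insideEdges_le ends hmono hsingle hI hXYne
  have hinter := card_insideEdges_le ends hmono hsingle hI hXY
  have hsuper : (#(insideEdges ends I X) : ℤ) + #(insideEdges ends I Y) ≤
      #(insideEdges ends I (X ∪ Y)) + #(insideEdges ends I (X ∩ Y)) := by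
    exact_mod_cast card_insideEdges_add_card_insideEdges_le ends I X Y
  exact ⟨hXYne, le_antisymm hunion (by linarith [hsub X Y, hX.2, hY.2])⟩

lemma exists_finpartition_isTight (hsub : ∀ X Y, g (X ∪ Y) + g (X ∩ Y) ≤ g X + g Y) :
    ∃ P : Finpartition (univ : Finset V), (∀ X ∈ P.parts, IsTight ends g I X) ∧
      ∀ X, IsTight ends g I X → ∃ Y ∈ P.parts, X ⊆ Y := by
  have hunion := isTight_union ends hmono hsingle hI hsub
  have hsingleton := isTight_singleton ends hmono hsingle hI
  let s : Setoid V :=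
    { r := fun u w => ∃ X, IsTight ends g I X ∧ u ∈ X ∧ w ∈ X
      iseqv :=
        { refl := fun u => ⟨{u}, hsingleton u, mem_singleton_self u, mem_singleton_self u⟩
          symm := fun ⟨X, hX, hu, hw⟩ => ⟨X, hX, hw, hu⟩
          trans := fun ⟨X, hX, hu, hw⟩ ⟨Y, hY, hw', hx⟩ =>
            ⟨X ∪ Y, hunion hX hY ⟨_, mem_inter.2 ⟨hw, hw'⟩⟩, mem_union_left _ hu,
              mem_union_right _ hx⟩ } }
  let P := Finpartition.ofSetoid s
  refine ⟨P, fun X hX => ?_, fun X hX => ?_⟩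
  · obtain ⟨u, hu⟩ := P.nonempty_of_mem_parts hX
    let 𝒯 := univ.filter fun Y => IsTight ends g I Y ∧ u ∈ Y
    have h𝒯 : 𝒯.Nonempty := ⟨{u}, mem_filter.2 ⟨mem_univ _, hsingleton u, mem_singleton_self u⟩⟩
    have hX𝒯 : X = 𝒯.sup' h𝒯 id := by
      ext w
      rw [← P.part_eq_of_mem hX hu, Finpartition.mem_part_ofSetoid_iff_rel]
      simp only [𝒯, mem_sup', mem_filter, mem_univ, true_and, id, and_assoc]
      rfl
    rw [hX𝒯]
    refine (sup'_induction h𝒯 id (p := fun Y => IsTight ends g I Y ∧ u ∈ Y) ?_ ?_).1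
    · rintro Y ⟨hY, huY⟩ Z ⟨hZ, huZ⟩
      exact ⟨hunion hY hZ ⟨u, mem_inter.2 ⟨huY, huZ⟩⟩, mem_union_left _ huY⟩
    · intro Y hY
      exact (mem_filter.1 hY).2
  · obtain ⟨u, hu⟩ := hX.1
    exact ⟨P.part u, P.part_mem.2 (mem_univ u),
      fun w hw => Finpartition.mem_part_ofSetoid_iff_rel.2 ⟨X, hX, hu, hw⟩⟩

end Independent

theorem inducedRank_comp_incVerts_eq_min (hmono : Monotone g) (hsingle : ∀ v, g {v} = 0)
    (hsub : ∀ X Y, g (X ∪ Y) + g (X ∩ Y) ≤ g X + g Y) (F : Finset E) :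
    (∀ P : Finpartition (univ : Finset V), (inducedRank (fun J => g (incVerts ends J)) F : ℤ) ≤
      #(crossingEdges ends P.parts F) + ∑ X ∈ P.parts, g X) ∧
    ∃ P : Finpartition (univ : Finset V), (inducedRank (fun J => g (incVerts ends J)) F : ℤ) =
      #(crossingEdges ends P.parts F) + ∑ X ∈ P.parts, g X := by
  obtain ⟨I, hIF, hI, hrank, hmax⟩ := exists_maximal_inducedIndep (fun J => g (incVerts ends J)) F
  have hle := card_le_card_crossingEdges_add_sum ends hmono hsingle hI hIF
  rw [hrank]
  refine ⟨hle, ?_⟩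
  obtain ⟨P, hPtight, hPmax⟩ := exists_finpartition_isTight ends hmono hsingle hI hsub
  -- Adding a crossing edge `e ∉ I` to `I` would create a violated set, which is tight and
  -- hence lies inside a single class.
  have hcross : crossingEdges ends P.parts F ⊆ crossingEdges ends P.parts I := by
    intro e he
    obtain ⟨heF, hnot⟩ := (mem_crossingEdges ends).1 he
    refine (mem_crossingEdges ends).2 ⟨?_, hnot⟩
    by_contra heI
    obtain ⟨X, hX, heX⟩ :=
      exists_isTight_of_not_inducedIndep_insert ends hmono hsingle hI (hmax e heF heI)
    obtain ⟨Y, hY, hXY⟩ := hPmax X hX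
    exact hnot ⟨Y, hY, fun v hv => hXY (heX v hv)⟩
  refine ⟨P, le_antisymm (hle P) ?_⟩
  calc (#(crossingEdges ends P.parts F) : ℤ) + ∑ X ∈ P.parts, g X
      ≤ #(crossingEdges ends P.parts I) + ∑ X ∈ P.parts, (#(insideEdges ends I X) : ℤ) := by
        rw [sum_congr rfl fun X hX => (hPtight X hX).2.symm]
        gcongr
    _ = #I := by
        exact_mod_cast (card_eq_card_crossingEdges_add_sum_card_insideEdges ends P I).symm

end TightSets

section RootedCount

variable {V ι : Type*} [Fintype ι] (root : ι → V)

noncomputable def fcountVerts (ρ : Finset ι → ℕ) (k : ℕ) (X : Finset V) : ℤ :=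
  k * (#X - 1) - (#(rootsIn root X) - ρ (rootsIn root X))

lemma fcount_eq_fcountVerts_incVerts {E : Type*} [Fintype V] [Fintype E] (ends : E → Sym2 V)
    (ρ : Finset ι → ℕ) (k : ℕ) :
    fcount ends root ρ k = fun F => fcountVerts root ρ k (incVerts ends F) := by
  funext F
  have hroots : rootsOf ends root F = rootsIn root (incVerts ends F) := by
    ext i
    simp [rootsOf, rootsIn]
  rw [fcount, fcountVerts, hroots]

lemma rootsIn_union [DecidableEq V] (X Y : Finset V) :
    rootsIn root (X ∪ Y) = rootsIn root X ∪ rootsIn root Y := by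
  ext i
  simp [rootsIn]

lemma rootsIn_inter [DecidableEq V] (X Y : Finset V) :
    rootsIn root (X ∩ Y) = rootsIn root X ∩ rootsIn root Y := by
  ext i
  simp [rootsIn]

lemma card_rootsIn (X : Finset V) : #(rootsIn root X) = ∑ v ∈ X, #(rootsAt root v) := by
  rw [card_eq_sum_card_fiberwise (f := root) fun i hi => by simpa [rootsIn] using hi]
  refine sum_congr rfl fun v hv => congrArg card ?_
  ext i
  simp only [rootsIn, rootsAt, mem_filter, mem_univ, true_and, and_iff_right_iff_imp]
  exact fun h => h ▸ hv

variable (M : FinMatroid ι) (k : ℕ)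

lemma fcountVerts_singleton (hC1 : CondC1 root M.rk) (v : V) :
    fcountVerts root M.rk k {v} = 0 := by
  have hroots : rootsIn root {v} = rootsAt root v := by
    ext i
    simp [rootsIn, rootsAt]
  simp [fcountVerts, hroots, hC1 v]

lemma fcountVerts_mono (hk : M.rk univ ≤ k) (hC1 : CondC1 root M.rk) :
    Monotone (fcountVerts root M.rk k) := by
  intro X Y hXY
  have hrootsAt : ∀ v, #(rootsAt root v) ≤ k := fun v =>
    (hC1 v).symm.le.trans ((M.rk_mono (subset_univ _)).trans hk)
  have hroots : #(rootsIn root Y) ≤ #(Y \ X) * k + #(rootsIn root X) := by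
    rw [card_rootsIn, card_rootsIn, ← sum_sdiff hXY]
    exact Nat.add_le_add_right (sum_le_card_nsmul _ _ _ fun v _ => hrootsAt v) _
  have hcard : (k : ℤ) * #Y = #(Y \ X) * k + k * #X := by
    rw [← card_sdiff_add_card_eq_card hXY]
    push_cast
    ring
  have hrk : M.rk (rootsIn root X) ≤ M.rk (rootsIn root Y) :=
    M.rk_mono fun i => by simpa [rootsIn] using @hXY (root i)
  simp only [fcountVerts]
  zify at hroots hrk
  linarith

lemma fcountVerts_submodular [DecidableEq V] (X Y : Finset V) :
    fcountVerts root M.rk k (X ∪ Y) + fcountVerts root M.rk k (X ∩ Y) ≤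
      fcountVerts root M.rk k X + fcountVerts root M.rk k Y := by
  have hcard : (#(X ∪ Y) : ℤ) + #(X ∩ Y) = #X + #Y := by
    exact_mod_cast card_union_add_card_inter X Y
  have hroots : (#(rootsIn root (X ∪ Y)) : ℤ) + #(rootsIn root (X ∩ Y)) =
      #(rootsIn root X) + #(rootsIn root Y) := by
    rw [rootsIn_union, rootsIn_inter]
    exact_mod_cast card_union_add_card_inter _ _
  have hrk : (M.rk (rootsIn root (X ∪ Y)) : ℤ) + M.rk (rootsIn root (X ∩ Y)) ≤
      M.rk (rootsIn root X) + M.rk (rootsIn root Y) := by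
    rw [rootsIn_union, rootsIn_inter]
    exact_mod_cast M.rk_submodular _ _
  simp only [fcountVerts]
  linear_combination (k : ℤ) * hcard - hroots + hrk

lemma sum_fcountVerts_parts [Fintype V] [DecidableEq V] (ρ : Finset ι → ℕ)
    (P : Finpartition (univ : Finset V)) :
    ∑ X ∈ P.parts, fcountVerts root ρ k X =
      k * (Fintype.card V - #P.parts) - Fintype.card ι +
        ∑ X ∈ P.parts, (ρ (rootsIn root X) : ℤ) := by
  have hV : ∑ X ∈ P.parts, #X = Fintype.card V := by rw [P.sum_card_parts, card_univ]
  have hι : ∑ X ∈ P.parts, #(rootsIn root X) = Fintype.card ι := by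
    have hroots_univ : rootsIn root (univ : Finset V) = univ := by
      ext i
      simp [rootsIn]
    calc ∑ X ∈ P.parts, #(rootsIn root X)
        = ∑ X ∈ P.parts, ∑ v ∈ id X, #(rootsAt root v) :=
          sum_congr rfl fun X _ => card_rootsIn root X
      _ = #(rootsIn root (univ : Finset V)) := by
        rw [← sum_biUnion P.disjoint, P.biUnion_parts, card_rootsIn]
      _ = Fintype.card ι := by rw [hroots_univ, card_univ]
  have hsum : ∑ X ∈ P.parts, fcountVerts root ρ k X = ∑ X ∈ P.parts,
      ((k : ℤ) * #X - k - #(rootsIn root X) + ρ (rootsIn root X)) :=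
    sum_congr rfl fun X _ => by rw [fcountVerts]; ring
  rw [hsum, sum_add_distrib, sum_sub_distrib, sum_sub_distrib, ← mul_sum, sum_const, nsmul_eq_mul]
  push_cast [← hV, ← hι]
  ring

end RootedCount

/-- **Theorem 4 (rank formula for `N(f_{M,k})`).**
Let `(G, R)` be a graph with roots and `M` a matroid on `R` of rank `k` satisfying (C1).
Then for every `F ⊆ E`, the rank of `F` in `N(f_{M,k})` equals the minimum over all
partitions `P` of `V` into nonempty classes of
`|δ_F(P)| + k(|V| - |P|) - |R| + Σ_{X ∈ P} r_M(R_X)`. -/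
theorem inducedRank_eq_min_partition {V E ι : Type*} [Fintype V] [Fintype E] [Fintype ι]
    [DecidableEq V]
    (ends : E → Sym2 V) (root : ι → V) (M : FinMatroid ι) (k : ℕ)
    (hk : M.rk Finset.univ = k)
    (hC1 : CondC1 root M.rk)
    (F : Finset E) :
    (∀ P : Finpartition (Finset.univ : Finset V),
      (inducedRank (fcount ends root M.rk (k : ℤ)) F : ℤ) ≤
        ((crossingEdges ends P.parts F).card : ℤ) +
          (k : ℤ) * ((Fintype.card V : ℤ) - (P.parts.card : ℤ)) -
          (Fintype.card ι : ℤ) + ∑ X ∈ P.parts, (M.rk (rootsIn root X) : ℤ)) ∧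
    (∃ P : Finpartition (Finset.univ : Finset V),
      (inducedRank (fcount ends root M.rk (k : ℤ)) F : ℤ) =
        ((crossingEdges ends P.parts F).card : ℤ) +
          (k : ℤ) * ((Fintype.card V : ℤ) - (P.parts.card : ℤ)) -
          (Fintype.card ι : ℤ) + ∑ X ∈ P.parts, (M.rk (rootsIn root X) : ℤ)) := by
  rw [fcount_eq_fcountVerts_incVerts]
  obtain ⟨hle, P, hP⟩ := inducedRank_comp_incVerts_eq_min ends (fcountVerts_mono root M k hk.le hC1)
    (fcountVerts_singleton root M k hC1) (fcountVerts_submodular root M k) F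
  simp only [sum_fcountVerts_parts, ← add_sub_assoc, ← add_assoc] at hle hP
  exact ⟨hle, P, hP⟩
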